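/- Let 1 < α < 2 and let X, X̃ be nonnegative random variables with E(X(log_+ X)^α + X̃(log_+ X̃)^{α−1}) < ∞. Then: (i) E(X(log_+ X̃)^α) < ∞ and E(X̃(log_+ X)^{α−1}) < ∞; (ii) as z → ∞, E(X (log_+(X + X̃))^α · min(log_+(X + X̃), z)) = o(z) and E(X̃ (log_+(X + X̃))^{α−1} · min(log_+(X + X̃), z)) = o(z). -/

import Mathlib

/-!
Everything rests on pointwise inequalities for `a, b ≥ 0`. Since `log t ≤ t / 2`, either
`a log⁺ b ≤ b` or `log⁺ b ≤ 2 log⁺ a`, whence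
`a (log⁺ b)^α ≤ 2^α a (log⁺ a)^α + b (log⁺ b)^(α-1)`; comparing `a` with `b` gives
`a (log⁺ b)^β ≤ a (log⁺ a)^β + b (log⁺ b)^β`. Together with
`log⁺ (a + b) ≤ log 2 + log⁺ a + log⁺ b` this makes `G = X (log⁺ (X + X̃))^α` and
`G = X̃ (log⁺ (X + X̃))^(α-1)` integrable, and then `E(G min(F, z)) / z → 0` for `F ≥ 0` by
dominated convergence, the integrand `G min(F, z) / z` being bounded by `|G|`.
-/

open MeasureTheory ProbabilityTheory Filter Asymptotics Real

namespace Real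

theorem log_le_half_self {t : ℝ} (ht : 0 < t) : log t ≤ t / 2 := by
  have h := log_le_sub_one_of_pos (div_pos ht (exp_pos 1))
  rw [log_div ht.ne' (exp_pos 1).ne', log_exp] at h
  have : t / exp 1 ≤ t / 2 := div_le_div_of_nonneg_left ht.le two_pos
    (by linarith [add_one_lt_exp one_ne_zero])
  linarith

theorem rpow_add_add_le {u v w p : ℝ} (hu : 0 ≤ u) (hv : 0 ≤ v) (hw : 0 ≤ w) (hp : 0 ≤ p) :
    (u + v + w) ^ p ≤ 3 ^ p * (u ^ p + v ^ p + w ^ p) := by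
  obtain ⟨m, hm⟩ : ∃ m, m = max u (max v w) := ⟨_, rfl⟩
  have hsum : u + v + w ≤ 3 * m := by
    linarith [le_max_left u (max v w), le_max_left v w, le_max_right v w,
      le_max_right u (max v w)]
  have hmp : m ^ p ≤ u ^ p + v ^ p + w ^ p := by
    have := rpow_nonneg hu p; have := rpow_nonneg hv p; have := rpow_nonneg hw p
    rcases max_choice u (max v w) with h | h <;> rw [hm, h]
    · linarith
    · rcases max_choice v w with h' | h' <;> rw [h'] <;> linarith
  calc (u + v + w) ^ p ≤ (3 * m) ^ p := by gcongr
    _ = 3 ^ p * m ^ p := mul_rpow (by norm_num) (hm ▸ hu.trans (le_max_left _ _))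
    _ ≤ 3 ^ p * (u ^ p + v ^ p + w ^ p) := by gcongr

theorem mul_posLog_rpow_nonneg {a : ℝ} (ha : 0 ≤ a) (b p : ℝ) : 0 ≤ a * log⁺ b ^ p :=
  mul_nonneg ha (rpow_nonneg posLog_nonneg p)

theorem mul_posLog_rpow_le {α a b : ℝ} (hα : 0 < α) (ha : 0 ≤ a) (hb : 0 ≤ b) :
    a * log⁺ b ^ α ≤ 2 ^ α * (a * log⁺ a ^ α) + b * log⁺ b ^ (α - 1) := by
  have hA : 0 ≤ 2 ^ α * (a * log⁺ a ^ α) :=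
    mul_nonneg (by positivity) (mul_posLog_rpow_nonneg ha a α)
  have hB := mul_posLog_rpow_nonneg hb b (α - 1)
  rcases posLog_nonneg.eq_or_lt with ht | ht
  · have : a * log⁺ b ^ α = 0 := by rw [← ht, zero_rpow hα.ne', mul_zero]
    linarith
  set t := log⁺ b
  by_cases hab : a * t ≤ b
  · calc a * t ^ α = a * t * t ^ (α - 1) := by
          rw [mul_assoc, ← rpow_one_add' ht.le (by linarith)]; ring_nf
      _ ≤ b * t ^ (α - 1) := by gcongr
      _ ≤ _ := le_add_of_nonneg_left hA
  · push Not at hab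
    have hb1 : 1 < b := by
      by_contra! h
      exact ht.ne' ((posLog_eq_zero_iff b).2 (by rwa [abs_of_nonneg hb]))
    have htb : t = log b := posLog_eq_log (by rw [abs_of_nonneg hb]; exact hb1.le)
    have ha0 : 0 < a := by
      by_contra! h
      nlinarith
    have hlog : t / 2 ≤ log⁺ a := by
      have : log b < log a + log t := by
        rw [← log_mul ha0.ne' ht.ne']
        exact log_lt_log (by linarith) hab
      have : log a ≤ log⁺ a := le_max_right _ _
      linarith [log_le_half_self ht]
    calc a * t ^ α ≤ a * (2 * log⁺ a) ^ α := by gcongr; linarith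
      _ = 2 ^ α * (a * log⁺ a ^ α) := by rw [mul_rpow two_pos.le posLog_nonneg]; ring
      _ ≤ _ := le_add_of_nonneg_right hB

theorem mul_posLog_rpow_le_add {β a b : ℝ} (hβ : 0 ≤ β) (ha : 0 ≤ a) (hb : 0 ≤ b) :
    a * log⁺ b ^ β ≤ a * log⁺ a ^ β + b * log⁺ b ^ β := by
  rcases le_total b a with hab | hab
  · have : a * log⁺ b ^ β ≤ a * log⁺ a ^ β := by
      gcongr
      exact posLog_nonneg
    linarith [mul_posLog_rpow_nonneg hb b β]
  · have : a * log⁺ b ^ β ≤ b * log⁺ b ^ β :=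
      mul_le_mul_of_nonneg_right hab (rpow_nonneg posLog_nonneg β)
    linarith [mul_posLog_rpow_nonneg ha a β]

theorem mul_posLog_rpow_le_of_le {β γ y : ℝ} (hβ : 0 ≤ β) (hβγ : β ≤ γ) (hy : 0 ≤ y) :
    y * log⁺ y ^ β ≤ exp 1 + y * log⁺ y ^ γ := by
  have hγ := mul_posLog_rpow_nonneg hy y γ
  have he : log⁺ (exp 1) = 1 := by rw [posLog_apply, log_exp, max_eq_right zero_le_one]
  rcases le_total y (exp 1) with hye | hye
  · have h1 : log⁺ y ≤ 1 := by
      simpa [he] using posLog_le_posLog hy hye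
    have : y * log⁺ y ^ β ≤ y * 1 := by
      gcongr
      exact rpow_le_one posLog_nonneg h1 hβ
    linarith
  · have h1 : 1 ≤ log⁺ y := by
      simpa [he] using posLog_le_posLog (exp_pos 1).le hye
    have : y * log⁺ y ^ β ≤ y * log⁺ y ^ γ := by gcongr
    linarith [exp_pos 1]

theorem mul_posLog_add_rpow_le {p a b : ℝ} (hp : 0 ≤ p) (ha : 0 ≤ a) :
    a * log⁺ (a + b) ^ p ≤
      3 ^ p * (log 2 ^ p * a + a * log⁺ a ^ p + a * log⁺ b ^ p) := by
  calc a * log⁺ (a + b) ^ p ≤ a * (log 2 + log⁺ a + log⁺ b) ^ p := by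
        gcongr
        exacts [posLog_nonneg, posLog_add]
    _ ≤ a * (3 ^ p * (log 2 ^ p + log⁺ a ^ p + log⁺ b ^ p)) := by
        gcongr
        exact rpow_add_add_le (log_nonneg one_le_two) posLog_nonneg posLog_nonneg hp
    _ = _ := by ring

end Real

section

variable {Ω : Type*} [MeasurableSpace Ω] {μ : Measure Ω} {X Y : Ω → ℝ}

theorem MeasureTheory.Integrable.of_nonneg_of_le {f g : Ω → ℝ} (hg : Integrable g μ)
    (hf : AEStronglyMeasurable f μ) (hf0 : ∀ ω, 0 ≤ f ω) (hfg : ∀ ω, f ω ≤ g ω) :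
    Integrable f μ :=
  hg.mono' hf (ae_of_all _ fun ω => by rw [Real.norm_of_nonneg (hf0 ω)]; exact hfg ω)

theorem integrable_mul_posLog_rpow_of_le [IsFiniteMeasure μ] {β γ : ℝ} (hX : Measurable X)
    (hX0 : ∀ ω, 0 ≤ X ω) (hβ : 0 ≤ β) (hβγ : β ≤ γ)
    (h : Integrable (fun ω => X ω * log⁺ (X ω) ^ γ) μ) :
    Integrable (fun ω => X ω * log⁺ (X ω) ^ β) μ :=
  ((integrable_const (exp 1)).add h).of_nonneg_of_le
    (by fun_prop : Measurable _).aestronglyMeasurable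
    (fun ω => mul_posLog_rpow_nonneg (hX0 ω) _ β)
    (fun ω => mul_posLog_rpow_le_of_le hβ hβγ (hX0 ω))

theorem integrable_of_integrable_mul_posLog_rpow [IsFiniteMeasure μ] {γ : ℝ}
    (hX : Measurable X) (hX0 : ∀ ω, 0 ≤ X ω) (hγ : 0 ≤ γ)
    (h : Integrable (fun ω => X ω * log⁺ (X ω) ^ γ) μ) : Integrable X μ := by
  simpa using integrable_mul_posLog_rpow_of_le hX hX0 le_rfl hγ h

theorem integrable_mul_posLog_rpow_of_mul_posLog_rpow_sub_one {α : ℝ} (hα : 0 < α)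
    (hX : Measurable X) (hY : Measurable Y) (hX0 : ∀ ω, 0 ≤ X ω) (hY0 : ∀ ω, 0 ≤ Y ω)
    (hXα : Integrable (fun ω => X ω * log⁺ (X ω) ^ α) μ)
    (hYα : Integrable (fun ω => Y ω * log⁺ (Y ω) ^ (α - 1)) μ) :
    Integrable (fun ω => X ω * log⁺ (Y ω) ^ α) μ :=
  ((hXα.const_mul (2 ^ α)).add hYα).of_nonneg_of_le
    (by fun_prop : Measurable _).aestronglyMeasurable
    (fun ω => mul_posLog_rpow_nonneg (hX0 ω) _ α)
    (fun ω => mul_posLog_rpow_le hα (hX0 ω) (hY0 ω))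

theorem integrable_mul_posLog_rpow_of_mul_posLog_rpow {β : ℝ} (hβ : 0 ≤ β)
    (hX : Measurable X) (hY : Measurable Y) (hX0 : ∀ ω, 0 ≤ X ω) (hY0 : ∀ ω, 0 ≤ Y ω)
    (hXβ : Integrable (fun ω => X ω * log⁺ (X ω) ^ β) μ)
    (hYβ : Integrable (fun ω => Y ω * log⁺ (Y ω) ^ β) μ) :
    Integrable (fun ω => X ω * log⁺ (Y ω) ^ β) μ :=
  (hXβ.add hYβ).of_nonneg_of_le (by fun_prop : Measurable _).aestronglyMeasurable
    (fun ω => mul_posLog_rpow_nonneg (hX0 ω) _ β)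
    (fun ω => mul_posLog_rpow_le_add hβ (hX0 ω) (hY0 ω))

theorem integrable_mul_posLog_add_rpow {p : ℝ} (hp : 0 ≤ p)
    (hX : Measurable X) (hY : Measurable Y) (hX0 : ∀ ω, 0 ≤ X ω)
    (hX1 : Integrable X μ) (hXX : Integrable (fun ω => X ω * log⁺ (X ω) ^ p) μ)
    (hXY : Integrable (fun ω => X ω * log⁺ (Y ω) ^ p) μ) :
    Integrable (fun ω => X ω * log⁺ (X ω + Y ω) ^ p) μ :=
  (((hX1.const_mul (log 2 ^ p)).add hXX).add hXY |>.const_mul (3 ^ p)).of_nonneg_of_le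
    (by fun_prop : Measurable _).aestronglyMeasurable
    (fun ω => mul_posLog_rpow_nonneg (hX0 ω) _ p)
    (fun ω => mul_posLog_add_rpow_le hp (hX0 ω))

theorem isLittleO_integral_mul_min {G F : Ω → ℝ} (hG : Integrable G μ)
    (hF : AEStronglyMeasurable F μ) (hF0 : ∀ᵐ ω ∂μ, 0 ≤ F ω) :
    (fun z : ℝ => ∫ ω, G ω * min (F ω) z ∂μ) =o[atTop] fun z => z := by
  refine isLittleO_iff_tendsto' ((eventually_gt_atTop 0).mono fun z hz h => (hz.ne' h).elim)
    |>.2 ?_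
  simp_rw [← integral_div, mul_div_assoc]
  rw [← integral_zero Ω ℝ]
  refine tendsto_integral_filter_of_dominated_convergence (fun ω => ‖G ω‖) ?_ ?_ hG.norm ?_
  · have := hG.aestronglyMeasurable
    exact .of_forall fun z => by fun_prop
  · filter_upwards [eventually_gt_atTop 0] with z hz
    filter_upwards [hF0] with ω hω
    rw [norm_mul]
    refine mul_le_of_le_one_right (norm_nonneg _) ?_
    rw [Real.norm_of_nonneg (div_nonneg (le_min hω hz.le) hz.le), div_le_one hz]
    exact min_le_right _ _
  · refine ae_of_all _ fun ω => ?_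
    have hFz : (fun z => F ω / z) =ᶠ[atTop] fun z => min (F ω) z / z := by
      filter_upwards [eventually_ge_atTop (F ω)] with z hz
      rw [min_eq_left hz]
    simpa using ((tendsto_id.const_div_atTop (F ω)).congr' hFz).const_mul (G ω)

end

theorem stmt_16_general
    {Ω : Type} [MeasureSpace Ω] [IsProbabilityMeasure (ℙ : Measure Ω)]
    (α : ℝ) (hα1 : 1 < α)
    (X Xt : Ω → ℝ) (hXmeas : Measurable X) (hXtmeas : Measurable Xt)
    (hXnn : ∀ ω, 0 ≤ X ω) (hXtnn : ∀ ω, 0 ≤ Xt ω)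
    (h17 : Integrable (fun ω =>
      X ω * max 0 (Real.log (X ω)) ^ α +
        Xt ω * max 0 (Real.log (Xt ω)) ^ (α - 1)) ℙ) :
    Integrable (fun ω => X ω * max 0 (Real.log (Xt ω)) ^ α) ℙ ∧
    Integrable (fun ω => Xt ω * max 0 (Real.log (X ω)) ^ (α - 1)) ℙ ∧
    ((fun z : ℝ => ∫ ω, X ω * max 0 (Real.log (X ω + Xt ω)) ^ α *
        min (max 0 (Real.log (X ω + Xt ω))) z ∂ℙ) =o[atTop] fun z : ℝ => z) ∧
    ((fun z : ℝ => ∫ ω, Xt ω * max 0 (Real.log (X ω + Xt ω)) ^ (α - 1) *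
        min (max 0 (Real.log (X ω + Xt ω))) z ∂ℙ) =o[atTop] fun z : ℝ => z) := by
  have hα : 0 ≤ α := by linarith
  have hα' : 0 ≤ α - 1 := by linarith
  obtain ⟨hXα, hXtα'⟩ := (integrable_add_iff_of_nonneg
    (f := fun ω => X ω * log⁺ (X ω) ^ α) (g := fun ω => Xt ω * log⁺ (Xt ω) ^ (α - 1))
    (by fun_prop : Measurable _).aestronglyMeasurable
    (ae_of_all _ fun ω => mul_posLog_rpow_nonneg (hXnn ω) _ _)
    (ae_of_all _ fun ω => mul_posLog_rpow_nonneg (hXtnn ω) _ _)).1 h17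
  have hXα' := integrable_mul_posLog_rpow_of_le hXmeas hXnn hα' (by linarith) hXα
  have hXXt := integrable_mul_posLog_rpow_of_mul_posLog_rpow_sub_one (by linarith)
    hXmeas hXtmeas hXnn hXtnn hXα hXtα'
  have hXtX := integrable_mul_posLog_rpow_of_mul_posLog_rpow hα'
    hXtmeas hXmeas hXtnn hXnn hXtα' hXα'
  have hF := (by fun_prop : Measurable fun ω => log⁺ (X ω + Xt ω)).aestronglyMeasurable (μ := ℙ)
  have hF0 : ∀ᵐ ω ∂ℙ, 0 ≤ log⁺ (X ω + Xt ω) := ae_of_all _ fun _ => posLog_nonneg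
  refine ⟨hXXt, hXtX, isLittleO_integral_mul_min ?_ hF hF0,
    isLittleO_integral_mul_min ?_ hF hF0⟩
  · exact integrable_mul_posLog_add_rpow hα hXmeas hXtmeas hXnn
      (integrable_of_integrable_mul_posLog_rpow hXmeas hXnn hα hXα) hXα hXXt
  · have h := integrable_mul_posLog_add_rpow hα' hXtmeas hXmeas hXtnn
      (integrable_of_integrable_mul_posLog_rpow hXtmeas hXtnn hα' hXtα') hXtα' hXtX
    simp_rw [add_comm (Xt _)] at h
    exact h

/-- **Lemma 4.2.** Let `1 < α < 2` and let `X, X̃` be nonnegative random variables with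
`E(X (log₊ X)^α + X̃ (log₊ X̃)^{α-1}) < ∞`. Then
(i) `E(X (log₊ X̃)^α) < ∞` and `E(X̃ (log₊ X)^{α-1}) < ∞`;
(ii) as `z → ∞`, `E(X (log₊(X+X̃))^α min(log₊(X+X̃), z)) = o(z)` and
`E(X̃ (log₊(X+X̃))^{α-1} min(log₊(X+X̃), z)) = o(z)`. -/
theorem stmt_16
    {Ω : Type} [MeasureSpace Ω] [IsProbabilityMeasure (ℙ : Measure Ω)]
    (α : ℝ) (hα1 : 1 < α) (hα2 : α < 2)
    (X Xt : Ω → ℝ) (hXmeas : Measurable X) (hXtmeas : Measurable Xt)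
    (hXnn : ∀ ω, 0 ≤ X ω) (hXtnn : ∀ ω, 0 ≤ Xt ω)
    (h17 : Integrable (fun ω =>
      X ω * max 0 (Real.log (X ω)) ^ α +
        Xt ω * max 0 (Real.log (Xt ω)) ^ (α - 1)) ℙ) :
    Integrable (fun ω => X ω * max 0 (Real.log (Xt ω)) ^ α) ℙ ∧
    Integrable (fun ω => Xt ω * max 0 (Real.log (X ω)) ^ (α - 1)) ℙ ∧
    ((fun z : ℝ => ∫ ω, X ω * max 0 (Real.log (X ω + Xt ω)) ^ α *
        min (max 0 (Real.log (X ω + Xt ω))) z ∂ℙ) =o[atTop] fun z : ℝ => z) ∧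
    ((fun z : ℝ => ∫ ω, Xt ω * max 0 (Real.log (X ω + Xt ω)) ^ (α - 1) *
        min (max 0 (Real.log (X ω + Xt ω))) z ∂ℙ) =o[atTop] fun z : ℝ => z) :=
  stmt_16_general α hα1 X Xt hXmeas hXtmeas hXnn hXtnn h17
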